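/- Assume the Notation 3.2 setup. Let i and m be natural numbers with f(i) ≤ m+1. Then Σ_{k=0}^{2^{m+2−f(i)}−1} A(k·2^{f(i)})·W_i·A(2^{m+2}−(k+1)·2^{f(i)}) ⊆ U(2^{m+1})A(2^{m+1}) + A(2^{m+1})U(2^{m+1}). -/

import Mathlib

open Module

noncomputable section

/-- The free associative algebra `K⟨x,y⟩` on two generators. -/
abbrev FA (K : Type*) [Field K] := FreeAlgebra K (Fin 2)

/-- The element of `K⟨x,y⟩` given by a word (a list of letters). -/
def wordOf (K : Type*) [Field K] (l : List (Fin 2)) : FA K :=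
  (l.map (FreeAlgebra.ι K)).prod

/-- `a` is a word of length `n` over the two generators. -/
def IsWord (K : Type*) [Field K] (n : ℕ) (a : FA K) : Prop :=
  ∃ l : List (Fin 2), l.length = n ∧ a = wordOf K l

/-- `A(n)`: the span of all words of length `n`. -/
def Aspan (K : Type*) [Field K] (n : ℕ) : Submodule K (FA K) :=
  Submodule.span K {a | IsWord K n a}

/-- The set `T = ∪_{i ≥ 1} {f(i)-g(i)-1, …, f(i)-1}`. -/
def Tset (f g : ℕ → ℕ) : Set ℕ :=
  {n | ∃ i, 1 ≤ i ∧ f i ≤ n + g i + 1 ∧ n + 1 ≤ f i}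

/-- The data and conditions of Notation 3.2 (with the subspaces `U(2^n)`, `V(2^n)`
satisfying conditions (1)–(8) of Proposition 3.1). Here `U n` and `V n` denote the
subspaces `U(2^n)` and `V(2^n)` of `A(2^n)`. -/
structure LSYSetup (K : Type*) [Field K] where
  f : ℕ → ℕ
  g : ℕ → ℕ
  W : ℕ → Submodule K (FA K)
  U : ℕ → Submodule K (FA K)
  V : ℕ → Submodule K (FA K)
  /-- `f(i-1) < f(i) - g(i) - 1` for all `i ≥ 1` -/
  hf : ∀ i, 1 ≤ i → f (i - 1) + g i + 1 < f i
  /-- `W_i ⊆ A(2^{f(i)})` -/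
  hW_le : ∀ i, 1 ≤ i → W i ≤ Aspan K (2 ^ f i)
  /-- `dim W_i ≤ 2^{2^{g(i)}} - 2` -/
  hW_dim : ∀ i, 1 ≤ i → finrank K (W i) ≤ 2 ^ 2 ^ g i - 2
  hU_le : ∀ n, U n ≤ Aspan K (2 ^ n)
  hV_le : ∀ n, V n ≤ Aspan K (2 ^ n)
  /-- (1) `U(2^n) ⊕ V(2^n) = A(2^n)` -/
  h_disj : ∀ n, Disjoint (U n) (V n)
  h_sup : ∀ n, U n ⊔ V n = Aspan K (2 ^ n)
  /-- (2) `dim V(2^n) = 2` whenever `n ∉ T` -/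
  h_dimV : ∀ n, n ∉ Tset f g → finrank K (V n) = 2
  /-- (3) `dim V(2^{n+j}) = 2^{2^j}` whenever `n = f(i)-g(i)-1` and `0 ≤ j ≤ g(i)` -/
  h_dimV' : ∀ i j n, 1 ≤ i → n + g i + 1 = f i → j ≤ g i →
      finrank K (V (n + j)) = 2 ^ 2 ^ j
  /-- (4) `V(2^n)` has a basis consisting of words -/
  h_basis : ∀ n, ∃ s : Set (FA K), (∀ w ∈ s, IsWord K (2 ^ n) w) ∧
      LinearIndependent K ((↑) : s → FA K) ∧ Submodule.span K s = V n
  /-- (5) `W_i ⊆ U(2^{f(i)})` -/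
  hWU : ∀ i, 1 ≤ i → W i ≤ U (f i)
  /-- (6) `A(2^n)U(2^n) + U(2^n)A(2^n) ⊆ U(2^{n+1})` -/
  hU_mul : ∀ n, Aspan K (2 ^ n) * U n ⊔ U n * Aspan K (2 ^ n) ≤ U (n + 1)
  /-- (7) `V(2^{n+1}) ⊆ V(2^n)V(2^n)` -/
  hV_mul : ∀ n, V (n + 1) ≤ V n * V n
  /-- (8) if `n ∉ T` then some word `w ∈ V(2^n)` has `w·A(2^n) ⊆ U(2^{n+1})` -/
  h_word : ∀ n, n ∉ Tset f g → ∃ w, IsWord K (2 ^ n) w ∧ w ∈ V n ∧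
      ∀ a ∈ Aspan K (2 ^ n), w * a ∈ U (n + 1)

variable {K : Type*} [Field K]

/-- `R(n) = {a ∈ A(n) : A(2^{m+1}-n)·a ⊆ U(2^{m+1})}`. -/
def Rspace (S : LSYSetup K) (n m : ℕ) : Submodule K (FA K) where
  carrier := {a | a ∈ Aspan K n ∧ ∀ b ∈ Aspan K (2 ^ (m + 1) - n), b * a ∈ S.U (m + 1)}
  add_mem' := by
    rintro a b ⟨ha1, ha2⟩ ⟨hb1, hb2⟩
    exact ⟨add_mem ha1 hb1, fun c hc => by
      rw [mul_add]; exact add_mem (ha2 c hc) (hb2 c hc)⟩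
  zero_mem' := ⟨zero_mem _, fun c hc => by rw [mul_zero]; exact zero_mem _⟩
  smul_mem' := by
    rintro k a ⟨ha1, ha2⟩
    exact ⟨Submodule.smul_mem _ k ha1, fun c hc => by
      rw [mul_smul_comm]; exact Submodule.smul_mem _ _ (ha2 c hc)⟩

/-- `L(n) = {a ∈ A(n) : a·A(2^{m+1}-n) ⊆ U(2^{m+1})}`. -/
def Lspace (S : LSYSetup K) (n m : ℕ) : Submodule K (FA K) where
  carrier := {a | a ∈ Aspan K n ∧ ∀ b ∈ Aspan K (2 ^ (m + 1) - n), a * b ∈ S.U (m + 1)}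
  add_mem' := by
    rintro a b ⟨ha1, ha2⟩ ⟨hb1, hb2⟩
    exact ⟨add_mem ha1 hb1, fun c hc => by
      rw [add_mul]; exact add_mem (ha2 c hc) (hb2 c hc)⟩
  zero_mem' := ⟨zero_mem _, fun c hc => by rw [zero_mul]; exact zero_mem _⟩
  smul_mem' := by
    rintro k a ⟨ha1, ha2⟩
    exact ⟨Submodule.smul_mem _ k ha1, fun c hc => by
      rw [smul_mul_assoc]; exact Submodule.smul_mem _ _ (ha2 c hc)⟩

/-- `I(n) = {a ∈ A(n) : A(j)·a·A(2^{m+2}-j-n) ⊆ U(2^{m+1})A(2^{m+1}) + A(2^{m+1})U(2^{m+1})`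
for all `0 ≤ j ≤ 2^{m+2}-n}`, where `2^m ≤ n < 2^{m+1}` (i.e. `m = Nat.log 2 n`). -/
def Ispace (S : LSYSetup K) (n : ℕ) : Submodule K (FA K) where
  carrier := {a | a ∈ Aspan K n ∧ ∀ j ≤ 2 ^ (Nat.log 2 n + 2) - n,
      ∀ b ∈ Aspan K j, ∀ c ∈ Aspan K (2 ^ (Nat.log 2 n + 2) - j - n),
      b * a * c ∈ S.U (Nat.log 2 n + 1) * Aspan K (2 ^ (Nat.log 2 n + 1)) ⊔
        Aspan K (2 ^ (Nat.log 2 n + 1)) * S.U (Nat.log 2 n + 1)}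
  add_mem' := by
    rintro a b ⟨ha1, ha2⟩ ⟨hb1, hb2⟩
    refine ⟨add_mem ha1 hb1, fun j hj c hc d hd => ?_⟩
    rw [mul_add, add_mul]
    exact add_mem (ha2 j hj c hc d hd) (hb2 j hj c hc d hd)
  zero_mem' := ⟨zero_mem _, fun j hj c hc d hd => by
    rw [mul_zero, zero_mul]; exact zero_mem _⟩
  smul_mem' := by
    rintro k a ⟨ha1, ha2⟩
    refine ⟨Submodule.smul_mem _ k ha1, fun j hj c hc d hd => ?_⟩
    rw [mul_smul_comm, smul_mul_assoc]
    exact Submodule.smul_mem _ _ (ha2 j hj c hc d hd)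

/-! A block of length `d` placed at a multiple of `d` never straddles the midpoint of a word
of length `2M` when `d ∣ M`, so it lies in `A(M)`-times-a-block or a-block-times-`A(M)`.
With `d = 2^{f(i)}`, induction on `n` using (5) and (6) puts every aligned block
`A(k·2^{f(i)}) W_i A(2^n - (k+1)·2^{f(i)})` into `U(2^n)`; one more halving at `n = m + 2`
gives the theorem. -/

lemma wordOf_append (l₁ l₂ : List (Fin 2)) :
    wordOf K (l₁ ++ l₂) = wordOf K l₁ * wordOf K l₂ := by
  simp [wordOf]

lemma Aspan_zero : Aspan K 0 = 1 := by
  have hwords : {a | IsWord K 0 a} = {(1 : FA K)} := by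
    ext a
    constructor
    · rintro ⟨l, hl, rfl⟩
      simp [List.length_eq_zero_iff.mp hl, wordOf]
    · rintro rfl
      exact ⟨[], rfl, by simp [wordOf]⟩
  rw [Aspan, hwords, Submodule.one_eq_span]

lemma Aspan_add (p q : ℕ) : Aspan K (p + q) = Aspan K p * Aspan K q := by
  rw [Aspan, Aspan, Aspan, Submodule.span_mul_span]
  congr 1
  ext a
  constructor
  · rintro ⟨l, hl, rfl⟩
    refine ⟨_, ⟨l.take p, by simp [hl], rfl⟩, _, ⟨l.drop p, by simp [hl], rfl⟩, ?_⟩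
    exact (wordOf_append _ _).symm.trans (by rw [List.take_append_drop])
  · rintro ⟨_, ⟨l₁, h₁, rfl⟩, _, ⟨l₂, h₂, rfl⟩, rfl⟩
    exact ⟨l₁ ++ l₂, by simp [h₁, h₂], (wordOf_append l₁ l₂).symm⟩

/-- `W` placed in the `k`-th slot of length `d` of words of length `N`. -/
def alignedBlock (W : Submodule K (FA K)) (d N k : ℕ) : Submodule K (FA K) :=
  Aspan K (k * d) * W * Aspan K (N - (k + 1) * d)

section alignedBlock

variable {W : Submodule K (FA K)} {d : ℕ}

lemma alignedBlock_add_right {M k : ℕ} (hk : (k + 1) * d ≤ M) (N : ℕ) :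
    alignedBlock W d (M + N) k = alignedBlock W d M k * Aspan K N := by
  rw [alignedBlock, alignedBlock, Nat.sub_add_comm hk, Aspan_add, ← mul_assoc]

lemma alignedBlock_add_left (q N k : ℕ) :
    alignedBlock W d (q * d + N) (q + k) = Aspan K (q * d) * alignedBlock W d N k := by
  have hstart : (q + k) * d = q * d + k * d := add_mul q k d
  have hrest : q * d + N - (q + k + 1) * d = N - (k + 1) * d := by
    rw [add_assoc, add_mul q, Nat.add_sub_add_left]
  rw [alignedBlock, alignedBlock, hstart, hrest, Aspan_add, mul_assoc, mul_assoc, mul_assoc]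

lemma alignedBlock_self : alignedBlock W d d 0 = W := by
  simp [alignedBlock, Aspan_zero]

lemma alignedBlock_double_le {M : ℕ} (hdM : d ∣ M) {P : Submodule K (FA K)}
    (hP : ∀ k, (k + 1) * d ≤ M → alignedBlock W d M k ≤ P)
    {k : ℕ} (hk : (k + 1) * d ≤ M + M) :
    alignedBlock W d (M + M) k ≤ P * Aspan K M ⊔ Aspan K M * P := by
  obtain ⟨q, rfl⟩ := hdM
  rw [mul_comm d q] at hP hk ⊢
  rcases lt_or_ge k q with hkq | hqk
  · have hleft : (k + 1) * d ≤ q * d := Nat.mul_le_mul_right d hkq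
    rw [alignedBlock_add_right hleft]
    exact le_sup_of_le_left (mul_le_mul_left (hP k hleft) _)
  · obtain ⟨k', rfl⟩ := Nat.exists_eq_add_of_le hqk
    have hright : (k' + 1) * d ≤ q * d := by
      rw [add_assoc, add_mul] at hk
      omega
    rw [alignedBlock_add_left]
    exact le_sup_of_le_right (mul_le_mul_right (hP k' hright) _)

end alignedBlock

lemma alignedBlock_le_U (S : LSYSetup K) {i : ℕ} (hi : 1 ≤ i) {n : ℕ} (hn : S.f i ≤ n)
    {k : ℕ} (hk : (k + 1) * 2 ^ S.f i ≤ 2 ^ n) :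
    alignedBlock (S.W i) (2 ^ S.f i) (2 ^ n) k ≤ S.U n := by
  induction n, hn using Nat.le_induction generalizing k with
  | base =>
    have hk0 : k = 0 := by
      simpa using Nat.le_of_mul_le_mul_right (hk.trans_eq (one_mul _).symm) (by positivity)
    rw [hk0, alignedBlock_self]
    exact S.hWU i hi
  | succ n hn ih =>
    rw [Nat.two_pow_succ] at hk ⊢
    calc alignedBlock (S.W i) (2 ^ S.f i) (2 ^ n + 2 ^ n) k
        ≤ S.U n * Aspan K (2 ^ n) ⊔ Aspan K (2 ^ n) * S.U n :=
          alignedBlock_double_le (pow_dvd_pow 2 hn) (fun _ => ih) hk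
      _ ≤ S.U (n + 1) := by rw [sup_comm]; exact S.hU_mul n

/-- If `f(i) ≤ m + 1`, then
`Σ_{k=0}^{2^{m+2-f(i)}-1} A(k·2^{f(i)})·W_i·A(2^{m+2} - (k+1)·2^{f(i)})
  ⊆ U(2^{m+1})A(2^{m+1}) + A(2^{m+1})U(2^{m+1})`. -/
theorem relations_land_in_U (S : LSYSetup K) (i m : ℕ) (hi : 1 ≤ i)
    (hfi : S.f i ≤ m + 1) :
    (∑ k ∈ Finset.range (2 ^ (m + 2 - S.f i)),
        Aspan K (k * 2 ^ S.f i) * S.W i * Aspan K (2 ^ (m + 2) - (k + 1) * 2 ^ S.f i))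
      ≤ S.U (m + 1) * Aspan K (2 ^ (m + 1)) ⊔ Aspan K (2 ^ (m + 1)) * S.U (m + 1) := by
  refine Finset.sum_induction _ (· ≤ _) (fun _ _ => add_le) bot_le fun k hk => ?_
  have hslot : (k + 1) * 2 ^ S.f i ≤ 2 ^ (m + 1) + 2 ^ (m + 1) := calc
    (k + 1) * 2 ^ S.f i ≤ 2 ^ (m + 2 - S.f i) * 2 ^ S.f i :=
      Nat.mul_le_mul_right _ (Finset.mem_range.mp hk)
    _ = 2 ^ (m + 1) + 2 ^ (m + 1) := by
      rw [← pow_add, Nat.sub_add_cancel (by omega), Nat.two_pow_succ]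
  have hblock := alignedBlock_double_le (pow_dvd_pow 2 hfi)
    (fun _ => alignedBlock_le_U S hi hfi) hslot
  rwa [← Nat.two_pow_succ] at hblock

end
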